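/- arXiv:2005.01337 — 3 statements merged into one kernel-verified Lean document; each statement's English description precedes it below -/
import Mathlib

section
/- Let k ≥ 1 be an integer and λ > 0. Let N be a random variable with the Poisson distribution of parameter kλ, and let (X_i)_{i≥1} be i.i.d. random variables uniformly distributed on {1,…,k}, with N and the X_i mutually independent. Then for every n ∈ ℕ, ℙ[∑_{i=1}^{N} X_i = n] = ∑ e^{−kλ} λ^{x_1+⋯+x_k} / (x_1!·x_2!⋯x_k!), where the sum is over all non-negative integers x_1,…,x_k with x_1 + 2x_2 + ⋯ + k·x_k = n. (That is, the Poisson process of order k has the Poisson-of-order-k marginal distribution.) -/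
/-
Write `S_m = X₀ + ⋯ + X_{m-1}`. Conditioning on `N` gives
`P(S_N = n) = ∑ₘ P(N = m) P(S_m = n)`. By independence the generating series of `S_m` is
`((z + z² + ⋯ + zᵏ) / k)ᵐ`, and the multinomial theorem makes its `n`-th coefficient
`k⁻ᵐ ∑ multinomial(x)`, over the `x` with `∑ x_j = m` and `∑ j x_j = n`. Against the Poisson weight `e^{-kλ} (kλ)ᵐ / m!` each term becomes
`e^{-kλ} λᵐ / ∏ x_j!`, and summing over `m` just regroups the `x` by `∑ x_j`.
-/

open MeasureTheory ProbabilityTheory Finset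
open scoped ENNReal

lemma PowerSeries.coeff_sum_fin_X_pow_succ {R : Type*} [Semiring R] (k m : ℕ) :
    coeff m (∑ j : Fin k, X ^ ((j : ℕ) + 1) : PowerSeries R)
      = if 1 ≤ m ∧ m ≤ k then 1 else 0 := by
  simp only [map_sum, coeff_X_pow]
  split_ifs with hm
  · have hne : ∀ j : Fin k, j ≠ ⟨m - 1, by omega⟩ → ¬m = (j : ℕ) + 1 :=
      fun j hj h => hj (Fin.ext (by simp only; omega))
    rw [sum_eq_single _ (fun j _ hj => if_neg (hne j hj)) (by simp)]
    simp only [ite_eq_left_iff]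
    omega
  · exact sum_eq_zero fun j _ => if_neg (by omega)

lemma PowerSeries.coeff_sum_X_pow_pow {R ι : Type*} [CommSemiring R] [DecidableEq ι]
    (s : Finset ι) (d : ι → ℕ) (m n : ℕ) :
    coeff n ((∑ j ∈ s, X ^ d j : PowerSeries R) ^ m)
      = ∑ x ∈ (piAntidiag s m).filter (fun x => ∑ j ∈ s, d j * x j = n),
          (Nat.multinomial s x : R) := by
  simp_rw [sum_pow_eq_sum_piAntidiag, ← pow_mul, prod_pow_eq_pow_sum, map_sum,
    ← map_natCast (C (R := R)), coeff_C_mul_X_pow, sum_filter, eq_comm]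

lemma ENNReal.tsum_eq_tsum_sum_of_mem_iff {α β : Type*} (f : α → ℝ≥0∞) (w : α → β)
    (T : β → Finset α) (hT : ∀ b x, x ∈ T b ↔ w x = b) :
    ∑' x, f x = ∑' b, ∑ x ∈ T b, f x := by
  rw [← ENNReal.tsum_fiberwise f w]
  refine tsum_congr fun b => ?_
  have hfiber : w ⁻¹' {b} = (T b : Set α) := by
    ext x
    simp [hT]
  rw [hfiber, Finset.tsum_subtype']

lemma mul_pow_div_factorial_mul_multinomial {ι : Type*} (s : Finset ι) (x : ι → ℕ)
    {k : ℝ} (hk : k ≠ 0) (c lam : ℝ) :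
    c * (k * lam) ^ (∑ j ∈ s, x j) / (∑ j ∈ s, x j).factorial
        * k⁻¹ ^ (∑ j ∈ s, x j) * Nat.multinomial s x
      = c * lam ^ (∑ j ∈ s, x j) / ((∏ j ∈ s, (x j).factorial : ℕ) : ℝ) := by
  have hspec : ((∏ j ∈ s, (x j).factorial : ℕ) : ℝ) * Nat.multinomial s x
      = (∑ j ∈ s, x j).factorial := by
    exact_mod_cast Nat.multinomial_spec s x
  have hprod : ((∏ j ∈ s, (x j).factorial : ℕ) : ℝ) ≠ 0 := by positivity
  have hmult : (Nat.multinomial s x : ℝ) ≠ 0 :=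
    Nat.cast_ne_zero.2 (Nat.multinomial_pos s x).ne'
  rw [mul_pow, inv_pow, ← hspec]
  field_simp

namespace ProbabilityTheory

variable {Ω : Type*} [MeasurableSpace Ω] {P : Measure Ω}

noncomputable def pgf (P : Measure Ω) (Y : Ω → ℕ) : PowerSeries ℝ≥0∞ :=
  PowerSeries.mk fun n => P {ω | Y ω = n}

@[simp]
lemma coeff_pgf (Y : Ω → ℕ) (n : ℕ) : PowerSeries.coeff n (pgf P Y) = P {ω | Y ω = n} :=
  PowerSeries.coeff_mk _ _

lemma pgf_zero [IsProbabilityMeasure P] : pgf P 0 = 1 := by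
  ext n
  rcases eq_or_ne n 0 with rfl | hn
  · simp
  · simp [hn, hn.symm, PowerSeries.coeff_one]

lemma IndepFun.pgf_add {Y Z : Ω → ℕ} (hY : Measurable Y) (hZ : Measurable Z)
    (h : IndepFun Y Z P) : pgf P (Y + Z) = pgf P Y * pgf P Z := by
  ext n
  have hunion : {ω | (Y + Z) ω = n} = ⋃ p ∈ antidiagonal n, Y ⁻¹' {p.1} ∩ Z ⁻¹' {p.2} := by
    ext ω
    simp
  rw [coeff_pgf, PowerSeries.coeff_mul, hunion, measure_biUnion_finset]
  · refine sum_congr rfl fun p _ => ?_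
    rw [coeff_pgf, coeff_pgf]
    exact h.measure_inter_preimage_eq_mul _ _ (measurableSet_singleton _)
      (measurableSet_singleton _)
  · intro p _ q _ hpq
    refine Set.disjoint_left.2 fun ω hp hq => hpq ?_
    simp only [Set.mem_inter_iff, Set.mem_preimage, Set.mem_singleton_iff] at hp hq
    exact Prod.ext (hp.1.symm.trans hq.1) (hp.2.symm.trans hq.2)
  · exact fun p _ => (hY (measurableSet_singleton _)).inter (hZ (measurableSet_singleton _))

lemma iIndepFun.pgf_sum [IsProbabilityMeasure P] {ι : Type*} {X : ι → Ω → ℕ}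
    (hX : ∀ i, Measurable (X i)) (h : iIndepFun X P) (s : Finset ι) :
    pgf P (∑ i ∈ s, X i) = ∏ i ∈ s, pgf P (X i) := by
  classical
  induction s using Finset.induction_on with
  | empty => simp [pgf_zero]
  | insert i s hi ih =>
    rw [sum_insert hi, prod_insert hi, ← ih, IndepFun.pgf_add (hX i) (by fun_prop)
      (h.indepFun_finsetSum_of_notMem hX hi).symm]

lemma pgf_eq_smul_of_uniform {Y : Ω → ℕ} {k : ℕ}
    (h : ∀ m, P {ω | Y ω = m} = if 1 ≤ m ∧ m ≤ k then (k : ℝ≥0∞)⁻¹ else 0) :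
    pgf P Y = (k : ℝ≥0∞)⁻¹ • ∑ j : Fin k, PowerSeries.X ^ ((j : ℕ) + 1) := by
  ext m
  rw [coeff_pgf, h, PowerSeries.coeff_smul, PowerSeries.coeff_sum_fin_X_pow_succ]
  split_ifs <;> simp

lemma iIndepFun.indepFun_finsetSum_of_option {ι β : Type*} [MeasurableSpace β]
    [AddCommMonoid β] [MeasurableAdd₂ β] {N : Ω → β} {X : ι → Ω → β}
    (h : iIndepFun (fun i : Option ι => Option.elim i N X) P) (hN : Measurable N)
    (hX : ∀ i, Measurable (X i)) (s : Finset ι) : IndepFun N (∑ i ∈ s, X i) P := by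
  have := h.indepFun_finsetSum_of_notMem (fun i => by cases i; exacts [hN, hX _])
    (s := s.map Function.Embedding.some) (i := none) (by simp)
  simpa using this.symm

lemma measure_randomIndex_mem_eq_tsum {β : Type*} [MeasurableSpace β] {N : Ω → ℕ}
    {S : ℕ → Ω → β} (hN : Measurable N) (hS : ∀ m, Measurable (S m))
    (hindep : ∀ m, IndepFun N (S m) P) {t : Set β} (ht : MeasurableSet t) :
    P {ω | S (N ω) ω ∈ t} = ∑' m, P {ω | N ω = m} * P {ω | S m ω ∈ t} := by
  have hunion : {ω | S (N ω) ω ∈ t} = ⋃ m, N ⁻¹' {m} ∩ S m ⁻¹' t := by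
    ext ω
    simp
  rw [hunion, measure_iUnion]
  · exact tsum_congr fun m =>
      (hindep m).measure_inter_preimage_eq_mul _ _ (measurableSet_singleton m) ht
  · intro m m' hm
    exact ((Set.disjoint_singleton.2 hm).preimage N).mono Set.inter_subset_left
      Set.inter_subset_left
  · exact fun m => (hN (measurableSet_singleton m)).inter (hS m ht)

end ProbabilityTheory

/-- **Poisson process of order k has the Poisson-of-order-k marginal.**
Let `N` be Poisson with parameter `k * lam`, and `(X i)` i.i.d. uniform on `{1, …, k}`,
with `N` and the `X i` mutually independent.  Then for every `n : ℕ`,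
`ℙ[∑_{i<N} X i = n] = ∑_{x₁,…,x_k ≥ 0, x₁+2x₂+⋯+k x_k = n}
    e^{-k lam} lam^{x₁+⋯+x_k} / (x₁! ⋯ x_k!)`. -/
theorem ppok_marginal_distribution
    {Ω : Type*} [MeasurableSpace Ω] (P : Measure Ω) [IsProbabilityMeasure P]
    (k : ℕ) (hk : 1 ≤ k) (lam : ℝ) (hlam : 0 < lam)
    (N : Ω → ℕ) (X : ℕ → Ω → ℕ)
    (hNmeas : Measurable N) (hXmeas : ∀ i, Measurable (X i))
    -- `N` is Poisson distributed with parameter `k * lam`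
    (hNdist : ∀ n : ℕ, P {ω | N ω = n}
      = ENNReal.ofReal (Real.exp (-((k : ℝ) * lam)) * ((k : ℝ) * lam) ^ n
          / (Nat.factorial n : ℝ)))
    -- each `X i` is uniformly distributed on `{1, …, k}`
    (hXdist : ∀ i, ∀ m : ℕ,
      P {ω | X i ω = m} = if 1 ≤ m ∧ m ≤ k then ((k : ℝ≥0∞))⁻¹ else 0)
    -- `N, X 0, X 1, …` are mutually independent (in particular the `X i` are independent,
    -- and together with `hXdist` they are i.i.d.)
    (hindep : iIndepFun
      (fun i : Option ℕ => Option.elim i N X) P) :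
    ∀ n : ℕ,
      P {ω | (∑ i ∈ Finset.range (N ω), X i ω) = n}
        = ∑' x : {x : Fin k → ℕ // (∑ j, (j.1 + 1) * x j) = n},
            ENNReal.ofReal (Real.exp (-((k : ℝ) * lam)) * lam ^ (∑ j, x.1 j)
              / ((∏ j, Nat.factorial (x.1 j) : ℕ) : ℝ)) := by
  intro n
  have hk₀ : (0 : ℝ) < k := by exact_mod_cast hk
  have hcompound : P {ω | ∑ i ∈ range (N ω), X i ω = n}
      = ∑' m, P {ω | N ω = m} * PowerSeries.coeff n (pgf P (∑ i ∈ range m, X i)) := by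
    simpa using measure_randomIndex_mem_eq_tsum (S := fun m => ∑ i ∈ range m, X i) hNmeas
      (fun m => by fun_prop) (fun m => hindep.indepFun_finsetSum_of_option hNmeas hXmeas _)
      (measurableSet_singleton n)
  rw [hcompound, ENNReal.tsum_eq_tsum_sum_of_mem_iff _ (fun x => ∑ j, x.1 j)
    (fun m => (piAntidiag univ m).subtype _) (by simp)]
  have hlaw : ∀ m, pgf P (∑ i ∈ range m, X i)
      = ((k : ℝ≥0∞)⁻¹ • ∑ j : Fin k, PowerSeries.X ^ ((j : ℕ) + 1)) ^ m := fun m => by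
    rw [(hindep.precomp (Option.some_injective ℕ)).pgf_sum hXmeas,
      prod_congr rfl fun i _ => pgf_eq_smul_of_uniform (hXdist i), prod_const, card_range]
  refine tsum_congr fun m => ?_
  rw [hlaw, smul_pow, PowerSeries.coeff_smul, PowerSeries.coeff_sum_X_pow_pow, hNdist,
    smul_eq_mul, mul_sum, mul_sum, ← sum_subtype_eq_sum_filter]
  refine sum_congr rfl fun x hx => ?_
  obtain ⟨rfl, -⟩ := mem_piAntidiag.1 (mem_subtype.1 hx)
  rw [← mul_pow_div_factorial_mul_multinomial univ x.1 hk₀.ne',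
    ENNReal.ofReal_mul (by positivity), ENNReal.ofReal_mul (by positivity),
    ENNReal.ofReal_pow (by positivity),
    ENNReal.ofReal_inv_of_pos hk₀, ENNReal.ofReal_natCast, ENNReal.ofReal_natCast, mul_assoc]
end

section
/- Let N be Poisson distributed with parameter kλt, let (X_i)_{i≥1} be i.i.d. uniform on {1,…,k}, and let (Y_i)_{i≥1} be i.i.d. square-integrable real random variables, with N, (X_i), (Y_i) mutually independent. Set Z(t) = ∑_{i=1}^{∑_{j=1}^{N} X_j} Y_i. Then Z(t) is square-integrable and Var[Z(t)] = (k(k+1)/2) · λ t · Var(Y_1) + (k(k+1)(2k+1)/6) · λ t · (𝔼[Y_1])². -/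
/-!
Both `N⁽ᵏ⁾(t) = ∑_{j < N} X_j` and `Z(t) = ∑_{i < N⁽ᵏ⁾(t)} Y_i` are random sums
`S_M = ∑_{i < M} W_i` of i.i.d. summands that are independent of the random number `M` of terms.
On the event `{M = n}` the random sum equals `S_n`, and this event is independent of `S_n`, so
`𝔼 g(S_M) = ∑ₙ ℙ(M = n) 𝔼 g(S_n)`. With `𝔼 S_n = n 𝔼 W` and `𝔼 S_n² = n Var W + n² (𝔼 W)²` this
gives Wald's identity `𝔼 S_M = 𝔼 M · 𝔼 W` and the Blackwell–Girshick formula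
`Var S_M = 𝔼 M · Var W + Var M · (𝔼 W)²`.
A Poisson variable of parameter `μ = kλt` has mean and variance `μ`, and a uniform variable on
`{1, …, k}` has moments `(k + 1) / 2` and `(k + 1)(2k + 1) / 6`. The first application gives
`𝔼 N⁽ᵏ⁾(t) = μ (k + 1) / 2` and `Var N⁽ᵏ⁾(t) = μ (k + 1)(2k + 1) / 6`, the second one the theorem.
-/

open MeasureTheory ProbabilityTheory
open scoped ENNReal NNReal

/-- Codomains for the joint family `(N, (X i), (Y i))`. -/
def mixCodom : Unit ⊕ ℕ ⊕ ℕ → Type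
  | .inl _ => ℕ
  | .inr (.inl _) => ℕ
  | .inr (.inr _) => ℝ

instance mixCodomMS : ∀ i, MeasurableSpace (mixCodom i)
  | .inl _ => inferInstanceAs (MeasurableSpace ℕ)
  | .inr (.inl _) => inferInstanceAs (MeasurableSpace ℕ)
  | .inr (.inr _) => inferInstanceAs (MeasurableSpace ℝ)

/-- The family consisting of `N`, the `X i` and the `Y i`, viewed as a single
indexed family of random variables; `iIndepFun` of this family expresses the mutual
independence of `N`, `(X i)_{i}` and `(Y i)_{i}`. -/
def mixFam {Ω : Type*} (N : Ω → ℕ) (X : ℕ → Ω → ℕ) (Y : ℕ → Ω → ℝ) :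
    ∀ i : Unit ⊕ ℕ ⊕ ℕ, Ω → mixCodom i
  | .inl _ => N
  | .inr (.inl j) => X j
  | .inr (.inr j) => Y j

open Finset
open scoped Nat

namespace Real

lemma hasSum_natCast_mul_pow_div_factorial (r : ℝ) :
    HasSum (fun n : ℕ => n * (r ^ n / n !)) (r * exp r) := by
  refine (hasSum_nat_add_iff' 1).mp ?_
  rw [sum_range_one, Nat.cast_zero, zero_mul, sub_zero]
  have h := (NormedSpace.expSeries_div_hasSum_exp r).mul_left r
  rw [← exp_eq_exp_ℝ] at h
  refine h.congr_fun fun n => ?_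
  rw [Nat.factorial_succ]
  push_cast
  field_simp
  ring

lemma hasSum_natCast_sq_mul_pow_div_factorial (r : ℝ) :
    HasSum (fun n : ℕ => (n : ℝ) ^ 2 * (r ^ n / n !)) ((r ^ 2 + r) * exp r) := by
  refine (hasSum_nat_add_iff' 1).mp ?_
  rw [sum_range_one, Nat.cast_zero, zero_pow two_ne_zero, zero_mul, sub_zero]
  have h := ((hasSum_natCast_mul_pow_div_factorial r).add
    (NormedSpace.expSeries_div_hasSum_exp r)).mul_left r
  rw [← exp_eq_exp_ℝ, show r * (r * exp r + exp r) = (r ^ 2 + r) * exp r by ring] at h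
  refine h.congr_fun fun n => ?_
  rw [Nat.factorial_succ]
  push_cast
  field_simp
  ring

end Real

namespace ProbabilityTheory

lemma hasSum_natCast_mul_poissonMeasure_real (r : ℝ≥0) :
    HasSum (fun n : ℕ => n * (poissonMeasure r).real {n}) r := by
  have h := (Real.hasSum_natCast_mul_pow_div_factorial r).mul_left (Real.exp (-r))
  rw [mul_left_comm, ← Real.exp_add, neg_add_cancel, Real.exp_zero, mul_one] at h
  exact h.congr_fun fun n => by rw [poissonMeasure_real_singleton]; ring

lemma hasSum_natCast_sq_mul_poissonMeasure_real (r : ℝ≥0) :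
    HasSum (fun n : ℕ => (n : ℝ) ^ 2 * (poissonMeasure r).real {n}) (r ^ 2 + r) := by
  have h := (Real.hasSum_natCast_sq_mul_pow_div_factorial r).mul_left (Real.exp (-r))
  rw [mul_left_comm, ← Real.exp_add, neg_add_cancel, Real.exp_zero, mul_one] at h
  exact h.congr_fun fun n => by rw [poissonMeasure_real_singleton]; ring

end ProbabilityTheory

lemma Finset.sum_Icc_one_natCast (k : ℕ) : ∑ m ∈ Icc 1 k, (m : ℝ) = k * (k + 1) / 2 := by
  induction k with
  | zero => simp
  | succ k ih =>
    rw [sum_Icc_succ_top (by omega), ih]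
    push_cast
    ring

lemma Finset.sum_Icc_one_natCast_sq (k : ℕ) :
    ∑ m ∈ Icc 1 k, (m : ℝ) ^ 2 = k * (k + 1) * (2 * k + 1) / 6 := by
  induction k with
  | zero => simp
  | succ k ih =>
    rw [sum_Icc_succ_top (by omega), ih]
    push_cast
    ring

lemma hasSum_mul_ite_Icc (k : ℕ) (g : ℕ → ℝ) (c : ℝ) :
    HasSum (fun m => g m * if 1 ≤ m ∧ m ≤ k then c else 0) ((∑ m ∈ Icc 1 k, g m) * c) := by
  rw [sum_mul]
  have h : HasSum (fun m => g m * if 1 ≤ m ∧ m ≤ k then c else 0)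
      (∑ m ∈ Icc 1 k, g m * if 1 ≤ m ∧ m ≤ k then c else 0) :=
    hasSum_sum_of_ne_finset_zero fun m hm => by rw [if_neg (by simpa using hm), mul_zero]
  rwa [sum_congr rfl fun m hm => by rw [if_pos (mem_Icc.mp hm)]] at h

lemma hasSum_natCast_mul_uniformIcc {k : ℕ} (hk : k ≠ 0) :
    HasSum (fun m : ℕ => m * if 1 ≤ m ∧ m ≤ k then (k : ℝ)⁻¹ else 0) ((k + 1) / 2) := by
  have h := hasSum_mul_ite_Icc k (fun m => (m : ℝ)) (k : ℝ)⁻¹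
  rwa [sum_Icc_one_natCast, div_mul_eq_mul_div, mul_right_comm, mul_inv_cancel₀ (by simpa),
    one_mul] at h

lemma hasSum_natCast_sq_mul_uniformIcc {k : ℕ} (hk : k ≠ 0) :
    HasSum (fun m : ℕ => (m : ℝ) ^ 2 * if 1 ≤ m ∧ m ≤ k then (k : ℝ)⁻¹ else 0)
      ((k + 1) * (2 * k + 1) / 6) := by
  have h := hasSum_mul_ite_Icc k (fun m => (m : ℝ) ^ 2) (k : ℝ)⁻¹
  rwa [sum_Icc_one_natCast_sq, div_mul_eq_mul_div, mul_right_comm, mul_right_comm (k : ℝ),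
    mul_inv_cancel₀ (by simpa), one_mul] at h

section NatValued

variable {Ω : Type*} [MeasurableSpace Ω] {P : Measure Ω} {W : Ω → ℕ} {p : ℕ → ℝ}
  {m₁ m₂ : ℝ}

lemma integrable_comp_nat_iff [IsFiniteMeasure P] (hW : Measurable W) {g : ℕ → ℝ} :
    Integrable (fun ω => g (W ω)) P ↔ Summable (fun n => P.real (W ⁻¹' {n}) * |g n|) := by
  rw [← Function.comp_def, ← integrable_map_measure .of_discrete hW.aemeasurable,
    Measure.map_eq_sum P W hW, integrable_sum_dirac_iff (fun _ => measure_ne_top _ _)]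
  rfl

lemma integral_comp_nat [IsFiniteMeasure P] (hW : Measurable W) (g : ℕ → ℝ) :
    ∫ ω, g (W ω) ∂P = ∑' n, P.real (W ⁻¹' {n}) * g n := by
  rw [← integral_map hW.aemeasurable .of_discrete, Measure.map_eq_sum P W hW,
    integral_sum_dirac (fun _ => measure_ne_top _ _)]
  rfl

lemma integral_natCast_of_hasSum [IsFiniteMeasure P] (hW : Measurable W)
    (hp : ∀ n, P.real (W ⁻¹' {n}) = p n)
    (h₁ : HasSum (fun n : ℕ => n * p n) m₁) :
    ∫ ω, (W ω : ℝ) ∂P = m₁ := by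
  rw [integral_comp_nat hW, ← h₁.tsum_eq]
  exact tsum_congr fun n => by rw [hp, mul_comm]

lemma integral_natCast_sq_of_hasSum [IsFiniteMeasure P] (hW : Measurable W)
    (hp : ∀ n, P.real (W ⁻¹' {n}) = p n)
    (h₂ : HasSum (fun n : ℕ => (n : ℝ) ^ 2 * p n) m₂) :
    ∫ ω, (W ω : ℝ) ^ 2 ∂P = m₂ := by
  rw [integral_comp_nat hW (fun n => (n : ℝ) ^ 2), ← h₂.tsum_eq]
  exact tsum_congr fun n => by rw [hp, mul_comm]

lemma memLp_two_natCast_of_hasSum [IsFiniteMeasure P] (hW : Measurable W)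
    (hp : ∀ n, P.real (W ⁻¹' {n}) = p n)
    (h₂ : HasSum (fun n : ℕ => (n : ℝ) ^ 2 * p n) m₂) :
    MemLp (fun ω => (W ω : ℝ)) 2 P := by
  refine (memLp_two_iff_integrable_sq (by fun_prop)).mpr ?_
  refine (integrable_comp_nat_iff hW (g := fun n => (n : ℝ) ^ 2)).mpr ?_
  simpa [hp, mul_comm] using h₂.summable

lemma variance_natCast_of_hasSum [IsProbabilityMeasure P] (hW : Measurable W)
    (hp : ∀ n, P.real (W ⁻¹' {n}) = p n) (h₁ : HasSum (fun n : ℕ => n * p n) m₁)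
    (h₂ : HasSum (fun n : ℕ => (n : ℝ) ^ 2 * p n) m₂) :
    variance (fun ω => (W ω : ℝ)) P = m₂ - m₁ ^ 2 := by
  rw [variance_eq_sub (memLp_two_natCast_of_hasSum hW hp h₂),
    integral_natCast_of_hasSum hW hp h₁, ← integral_natCast_sq_of_hasSum hW hp h₂]
  rfl

lemma summable_measureReal_mul_of_integrable [IsFiniteMeasure P] (hW : Measurable W) {g : ℕ → ℝ}
    (h : Integrable (fun ω => g (W ω)) P) :
    Summable (fun n => P.real (W ⁻¹' {n}) * g n) :=
  .of_norm <| by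
    simpa [abs_mul, abs_of_nonneg measureReal_nonneg] using (integrable_comp_nat_iff hW).mp h

lemma identDistrib_of_measureReal_preimage_singleton [IsFiniteMeasure P] {V : Ω → ℕ}
    (hW : Measurable W) (hV : Measurable V)
    (h : ∀ n, P.real (W ⁻¹' {n}) = P.real (V ⁻¹' {n})) :
    IdentDistrib W V P P where
  aemeasurable_fst := hW.aemeasurable
  aemeasurable_snd := hV.aemeasurable
  map_eq := Measure.ext_of_singleton fun n => by
    rw [Measure.map_apply hW (measurableSet_singleton n),
      Measure.map_apply hV (measurableSet_singleton n)]
    exact (measureReal_eq_measureReal_iff (measure_ne_top _ _) (measure_ne_top _ _)).mp (h n)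

end NatValued

lemma Set.iUnion_preimage_singleton {α β : Type*} (f : α → β) : ⋃ b, f ⁻¹' {b} = univ := by
  ext
  simp

section RandomIndex

variable {Ω : Type*} [MeasurableSpace Ω] {P : Measure Ω} {M : Ω → ℕ}

lemma measurable_comp_randomIndex {β : Type*} [MeasurableSpace β] {f : ℕ → Ω → β}
    (hM : Measurable M) (hf : ∀ n, Measurable (f n)) : Measurable (fun ω => f (M ω) ω) :=
  (measurable_from_prod_countable_left (f := fun q : Ω × ℕ => f q.2 q.1) hf).comp
    (measurable_id.prodMk hM)

lemma lintegral_comp_randomIndex {f : ℕ → Ω → ℝ≥0∞} (hM : Measurable M)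
    (hf : ∀ n, Measurable (f n)) (hindep : ∀ n, IndepFun M (f n) P) :
    ∫⁻ ω, f (M ω) ω ∂P = ∑' n, P (M ⁻¹' {n}) * ∫⁻ ω, f n ω ∂P := by
  rw [← setLIntegral_univ, ← Set.iUnion_preimage_singleton M,
    lintegral_iUnion (fun n => hM (measurableSet_singleton n)) (pairwise_disjoint_fiber M)]
  refine tsum_congr fun n => ?_
  have hA : MeasurableSet (M ⁻¹' {n}) := hM (measurableSet_singleton n)
  have hind : IndepFun (fun ω => (M ⁻¹' {n}).indicator (1 : Ω → ℝ≥0∞) ω) (f n) P :=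
    (hindep n).comp (measurable_from_nat (f := ({n} : Set ℕ).indicator 1)) measurable_id
  calc ∫⁻ ω in M ⁻¹' {n}, f (M ω) ω ∂P
      = ∫⁻ ω, (M ⁻¹' {n}).indicator 1 ω * f n ω ∂P := by
        rw [← lintegral_indicator hA]
        refine lintegral_congr fun ω => ?_
        by_cases h : M ω = n <;> simp [h, Set.indicator]
    _ = P (M ⁻¹' {n}) * ∫⁻ ω, f n ω ∂P := by
        rw [lintegral_mul_eq_lintegral_mul_lintegral_of_indepFun''
          (measurable_one.indicator hA).aemeasurable (hf n).aemeasurable hind,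
          lintegral_indicator_one hA]

lemma integral_comp_randomIndex {f : ℕ → Ω → ℝ} (hM : Measurable M)
    (hf : ∀ n, Measurable (f n)) (hindep : ∀ n, IndepFun M (f n) P)
    (hint : Integrable (fun ω => f (M ω) ω) P) :
    ∫ ω, f (M ω) ω ∂P = ∑' n, P.real (M ⁻¹' {n}) * ∫ ω, f n ω ∂P := by
  rw [← setIntegral_univ, ← Set.iUnion_preimage_singleton M,
    integral_iUnion (fun n => hM (measurableSet_singleton n)) (pairwise_disjoint_fiber M)
      (by rwa [Set.iUnion_preimage_singleton, integrableOn_univ])]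
  refine tsum_congr fun n => ?_
  have hA : MeasurableSet (M ⁻¹' {n}) := hM (measurableSet_singleton n)
  calc ∫ ω in M ⁻¹' {n}, f (M ω) ω ∂P = ∫ ω in M ⁻¹' {n}, f n ω ∂P :=
        setIntegral_congr_fun hA fun ω (hω : M ω = n) => by rw [hω]
    _ = P.real (M ⁻¹' {n}) * ∫ ω, f n ω ∂P :=
        ((IndepFun_iff_Indep _ _ _).mp (hindep n)).setIntegral_eq_mul (f := id) hM.comap_le
          (hf n).aemeasurable ⟨{n}, measurableSet_singleton n, rfl⟩
          aestronglyMeasurable_id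

lemma integrable_comp_randomIndex [IsFiniteMeasure P] {f : ℕ → Ω → ℝ} (hM : Measurable M)
    (hf : ∀ n, Measurable (f n)) (hindep : ∀ n, IndepFun M (f n) P)
    (hfint : ∀ n, Integrable (f n) P)
    (hsum : Summable (fun n => P.real (M ⁻¹' {n}) * ∫ ω, ‖f n ω‖ ∂P)) :
    Integrable (fun ω => f (M ω) ω) P := by
  refine ⟨(measurable_comp_randomIndex hM hf).aestronglyMeasurable, ?_⟩
  calc ∫⁻ ω, ‖f (M ω) ω‖ₑ ∂P = ∑' n, P (M ⁻¹' {n}) * ∫⁻ ω, ‖f n ω‖ₑ ∂P :=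
        lintegral_comp_randomIndex (f := fun n ω => ‖f n ω‖ₑ) hM (fun n => (hf n).enorm)
          (fun n => (hindep n).comp measurable_id measurable_enorm)
    _ = ∑' n, ENNReal.ofReal (P.real (M ⁻¹' {n}) * ∫ ω, ‖f n ω‖ ∂P) := by
        refine tsum_congr fun n => ?_
        rw [ENNReal.ofReal_mul measureReal_nonneg, ofReal_measureReal,
          ofReal_integral_norm_eq_lintegral_enorm (hfint n)]
    _ = ENNReal.ofReal (∑' n, P.real (M ⁻¹' {n}) * ∫ ω, ‖f n ω‖ ∂P) :=
        (ENNReal.ofReal_tsum_of_nonneg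
          (fun n => mul_nonneg measureReal_nonneg (integral_nonneg fun _ => norm_nonneg _))
          hsum).symm
    _ < ⊤ := ENNReal.ofReal_lt_top

end RandomIndex

section RandomSum

variable {Ω β : Type*} {mΩ : MeasurableSpace Ω}

def randomSum [AddCommMonoid β] (M : Ω → ℕ) (X : ℕ → Ω → β) (ω : Ω) : β :=
  ∑ i ∈ range (M ω), X i ω

lemma measurable_randomSum [AddCommMonoid β] [MeasurableSpace β] [MeasurableAdd₂ β]
    {M : Ω → ℕ} {X : ℕ → Ω → β} (hM : Measurable M) (hX : ∀ i, Measurable (X i)) :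
    Measurable (randomSum M X) :=
  measurable_comp_randomIndex hM fun _ => measurable_sum _ fun i _ => hX i

variable {P : Measure Ω} {M : Ω → ℕ} {W : ℕ → Ω → ℝ}

lemma integral_sum_range_of_identDistrib (hident : ∀ i, IdentDistrib (W i) (W 0) P P)
    (hint : Integrable (W 0) P) (n : ℕ) :
    ∫ ω, ∑ i ∈ range n, W i ω ∂P = n * ∫ ω, W 0 ω ∂P := by
  rw [integral_finsetSum _ fun i _ => (hident i).integrable_iff.mpr hint,
    sum_congr rfl fun i _ => (hident i).integral_eq, sum_const, card_range, nsmul_eq_mul]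

lemma integral_norm_sum_range_le (hident : ∀ i, IdentDistrib (W i) (W 0) P P)
    (hint : Integrable (W 0) P) (n : ℕ) :
    ∫ ω, ‖∑ i ∈ range n, W i ω‖ ∂P ≤ n * ∫ ω, ‖W 0 ω‖ ∂P := by
  have hint' : ∀ i, Integrable (W i) P := fun i => (hident i).integrable_iff.mpr hint
  calc ∫ ω, ‖∑ i ∈ range n, W i ω‖ ∂P ≤ ∫ ω, ∑ i ∈ range n, ‖W i ω‖ ∂P :=
        integral_mono (integrable_finsetSum _ fun i _ => hint' i).norm
          (integrable_finsetSum _ fun i _ => (hint' i).norm) fun ω => norm_sum_le _ _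
    _ = n * ∫ ω, ‖W 0 ω‖ ∂P :=
        integral_sum_range_of_identDistrib (W := fun i ω => ‖W i ω‖) (fun i => (hident i).norm)
          hint.norm n

lemma integral_sq_sum_range_of_iIndepFun [IsProbabilityMeasure P]
    (hident : ∀ i, IdentDistrib (W i) (W 0) P P)
    (hW : MemLp (W 0) 2 P) (hindep : iIndepFun W P) (n : ℕ) :
    ∫ ω, (∑ i ∈ range n, W i ω) ^ 2 ∂P
      = n * variance (W 0) P + (n * ∫ ω, W 0 ω ∂P) ^ 2 := by
  have hW' : ∀ i, MemLp (W i) 2 P := fun i => (hident i).memLp_iff.mpr hW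
  have hvar : variance (∑ i ∈ range n, W i) P = n * variance (W 0) P := by
    rw [IndepFun.variance_sum (fun i _ => hW' i) fun i _ j _ hij => hindep.indepFun hij,
      sum_congr rfl fun i _ => (hident i).variance_eq, sum_const, card_range, nsmul_eq_mul]
  have hsub := variance_eq_sub (memLp_finsetSum' (range n) fun i _ => hW' i)
  simp only [Pi.pow_apply, Finset.sum_apply] at hsub
  rw [← integral_sum_range_of_identDistrib hident (hW.integrable one_le_two), ← hvar, hsub]
  ring

lemma integrable_randomSum [IsFiniteMeasure P] (hM : Measurable M) (hW : ∀ i, Measurable (W i))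
    (hident : ∀ i, IdentDistrib (W i) (W 0) P P) (hint : Integrable (W 0) P)
    (hMint : Integrable (fun ω => (M ω : ℝ)) P)
    (hMS : ∀ n, IndepFun M (fun ω => ∑ i ∈ range n, W i ω) P) :
    Integrable (randomSum M W) P := by
  refine integrable_comp_randomIndex hM (fun n => measurable_sum _ fun i _ => hW i) hMS
    (fun n => integrable_finsetSum _ fun i _ => (hident i).integrable_iff.mpr hint) ?_
  refine .of_nonneg_of_le
    (fun n => mul_nonneg measureReal_nonneg (integral_nonneg fun _ => norm_nonneg _))
    (fun n => mul_le_mul_of_nonneg_left (integral_norm_sum_range_le hident hint n)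
      measureReal_nonneg) ?_
  simpa [mul_assoc] using
    (summable_measureReal_mul_of_integrable hM hMint).mul_right (∫ ω, ‖W 0 ω‖ ∂P)

lemma integral_randomSum [IsFiniteMeasure P] (hM : Measurable M) (hW : ∀ i, Measurable (W i))
    (hident : ∀ i, IdentDistrib (W i) (W 0) P P) (hint : Integrable (W 0) P)
    (hMint : Integrable (fun ω => (M ω : ℝ)) P)
    (hMS : ∀ n, IndepFun M (fun ω => ∑ i ∈ range n, W i ω) P) :
    ∫ ω, randomSum M W ω ∂P = (∫ ω, (M ω : ℝ) ∂P) * ∫ ω, W 0 ω ∂P := by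
  unfold randomSum
  rw [integral_comp_randomIndex hM (fun n => measurable_sum _ fun i _ => hW i) hMS
    (integrable_randomSum hM hW hident hint hMint hMS), integral_comp_nat hM, ← tsum_mul_right]
  exact tsum_congr fun n => by rw [integral_sum_range_of_identDistrib hident hint n, mul_assoc]

lemma memLp_two_randomSum [IsProbabilityMeasure P] (hM : Measurable M)
    (hW : ∀ i, Measurable (W i)) (hident : ∀ i, IdentDistrib (W i) (W 0) P P)
    (hW2 : MemLp (W 0) 2 P) (hindep : iIndepFun W P) (hM2 : MemLp (fun ω => (M ω : ℝ)) 2 P)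
    (hMS : ∀ n, IndepFun M (fun ω => ∑ i ∈ range n, W i ω) P) :
    MemLp (randomSum M W) 2 P := by
  refine (memLp_two_iff_integrable_sq (measurable_randomSum hM hW).aestronglyMeasurable).mpr ?_
  refine integrable_comp_randomIndex (f := fun n ω => (∑ i ∈ range n, W i ω) ^ 2) hM
    (fun n => (measurable_sum _ fun i _ => hW i).pow_const 2)
    (fun n => (hMS n).comp measurable_id (measurable_id.pow_const 2))
    (fun n => (memLp_finsetSum _ fun i _ => (hident i).memLp_iff.mpr hW2).integrable_sq) ?_
  have h₁ := summable_measureReal_mul_of_integrable hM (hM2.integrable one_le_two)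
  have h₂ := summable_measureReal_mul_of_integrable hM (g := fun n => (n : ℝ) ^ 2)
    hM2.integrable_sq
  simp only [norm_pow, Real.norm_eq_abs, sq_abs,
    integral_sq_sum_range_of_iIndepFun hident hW2 hindep]
  exact ((h₁.mul_right (variance (W 0) P)).add (h₂.mul_right ((∫ ω, W 0 ω ∂P) ^ 2))).congr
    fun n => by ring

lemma variance_randomSum [IsProbabilityMeasure P] (hM : Measurable M)
    (hW : ∀ i, Measurable (W i)) (hident : ∀ i, IdentDistrib (W i) (W 0) P P)
    (hW2 : MemLp (W 0) 2 P) (hindep : iIndepFun W P) (hM2 : MemLp (fun ω => (M ω : ℝ)) 2 P)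
    (hMS : ∀ n, IndepFun M (fun ω => ∑ i ∈ range n, W i ω) P) :
    variance (randomSum M W) P
      = (∫ ω, (M ω : ℝ) ∂P) * variance (W 0) P
        + variance (fun ω => (M ω : ℝ)) P * (∫ ω, W 0 ω ∂P) ^ 2 := by
  have hZ2 := memLp_two_randomSum hM hW hident hW2 hindep hM2 hMS
  have h₁ := summable_measureReal_mul_of_integrable hM (hM2.integrable one_le_two)
  have h₂ := summable_measureReal_mul_of_integrable hM (g := fun n => (n : ℝ) ^ 2)
    hM2.integrable_sq
  have hsq : ∫ ω, randomSum M W ω ^ 2 ∂P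
      = (∫ ω, (M ω : ℝ) ∂P) * variance (W 0) P
        + (∫ ω, (M ω : ℝ) ^ 2 ∂P) * (∫ ω, W 0 ω ∂P) ^ 2 := by
    unfold randomSum
    rw [integral_comp_randomIndex (f := fun n ω => (∑ i ∈ range n, W i ω) ^ 2) hM
      (fun n => (measurable_sum _ fun i _ => hW i).pow_const 2)
      (fun n => (hMS n).comp measurable_id (measurable_id.pow_const 2)) hZ2.integrable_sq,
      integral_comp_nat hM, integral_comp_nat hM (fun n => (n : ℝ) ^ 2), ← tsum_mul_right,
      ← tsum_mul_right, ← (h₁.mul_right _).tsum_add (h₂.mul_right _)]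
    exact tsum_congr fun n => by
      rw [integral_sq_sum_range_of_iIndepFun hident hW2 hindep]; ring
  rw [variance_eq_sub hZ2, variance_eq_sub hM2,
    integral_randomSum hM hW hident (hW2.integrable one_le_two) (hM2.integrable one_le_two) hMS]
  simp only [Pi.pow_apply]
  rw [hsq]
  ring

lemma natCast_randomSum (M : Ω → ℕ) (X : ℕ → Ω → ℕ) :
    (fun ω => ((randomSum M X ω : ℕ) : ℝ)) = randomSum M (fun i ω => (X i ω : ℝ)) := by
  ext ω
  simp [randomSum]

end RandomSum

namespace ProbabilityTheory

variable {Ω : Type*} {mΩ : MeasurableSpace Ω} {P : Measure Ω} {ι : Type*} {β : ι → Type*}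
  {m : ∀ i, MeasurableSpace (β i)} {f : ∀ i, Ω → β i}

lemma measurable_biSup_comap_of_mem {S : Set ι} {i : ι} (hi : i ∈ S) :
    Measurable[⨆ j ∈ S, (m j).comap (f j)] (f i) :=
  (comap_measurable (f i)).mono (le_biSup (fun j => (m j).comap (f j)) hi) le_rfl

lemma iIndepFun.indepFun_of_measurable_biSup (hf : iIndepFun f P) (hmeas : ∀ i, Measurable (f i))
    {S T : Set ι} (hST : Disjoint S T) {γ δ : Type*} [MeasurableSpace γ] [MeasurableSpace δ]
    {F : Ω → γ} {G : Ω → δ} (hF : Measurable[⨆ i ∈ S, (m i).comap (f i)] F)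
    (hG : Measurable[⨆ i ∈ T, (m i).comap (f i)] G) :
    IndepFun F G P :=
  (IndepFun_iff_Indep F G P).mpr <| indep_of_indep_of_le
    (indep_iSup_of_disjoint (fun i => (hmeas i).comap_le) hf.iIndep hST) hF.comap_le hG.comap_le

end ProbabilityTheory

lemma randomSum_poisson_uniformIcc_moments {Ω : Type*} [MeasurableSpace Ω] {P : Measure Ω}
    [IsProbabilityMeasure P] {k : ℕ} (hk : k ≠ 0) {r : ℝ≥0} {N : Ω → ℕ} {X : ℕ → Ω → ℕ}
    (hN : Measurable N) (hX : ∀ i, Measurable (X i))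
    (hNlaw : ∀ n, P.real (N ⁻¹' {n}) = (poissonMeasure r).real {n})
    (hXlaw : ∀ i m, P.real (X i ⁻¹' {m}) = if 1 ≤ m ∧ m ≤ k then (k : ℝ)⁻¹ else 0)
    (hXindep : iIndepFun X P) (hNX : ∀ n, IndepFun N (fun ω => ∑ j ∈ range n, (X j ω : ℝ)) P) :
    MemLp (fun ω => ((randomSum N X ω : ℕ) : ℝ)) 2 P ∧
      ∫ ω, ((randomSum N X ω : ℕ) : ℝ) ∂P = r * ((k + 1) / 2) ∧
      variance (fun ω => ((randomSum N X ω : ℕ) : ℝ)) P = r * ((k + 1) * (2 * k + 1) / 6) := by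
  have hXr : ∀ i, Measurable (fun ω => (X i ω : ℝ)) := fun i => measurable_from_nat.comp (hX i)
  have hXident : ∀ i, IdentDistrib (fun ω => (X i ω : ℝ)) (fun ω => (X 0 ω : ℝ)) P P := fun i =>
    (identDistrib_of_measureReal_preimage_singleton (hX i) (hX 0) fun m => by
      rw [hXlaw, hXlaw]).comp measurable_from_nat
  have hXr_indep : iIndepFun (fun i ω => (X i ω : ℝ)) P :=
    hXindep.comp _ fun _ => measurable_from_nat
  have hN₁ := hasSum_natCast_mul_poissonMeasure_real r
  have hN₂ := hasSum_natCast_sq_mul_poissonMeasure_real r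
  have hX₁ := hasSum_natCast_mul_uniformIcc hk
  have hX₂ := hasSum_natCast_sq_mul_uniformIcc hk
  have hN2 := memLp_two_natCast_of_hasSum hN hNlaw hN₂
  have hX2 := memLp_two_natCast_of_hasSum (hX 0) (hXlaw 0) hX₂
  rw [natCast_randomSum]
  refine ⟨memLp_two_randomSum hN hXr hXident hX2 hXr_indep hN2 hNX, ?_, ?_⟩
  · rw [integral_randomSum hN hXr hXident (hX2.integrable one_le_two)
      (hN2.integrable one_le_two) hNX, integral_natCast_of_hasSum hN hNlaw hN₁,
      integral_natCast_of_hasSum (hX 0) (hXlaw 0) hX₁]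
  · rw [variance_randomSum hN hXr hXident hX2 hXr_indep hN2 hNX,
      integral_natCast_of_hasSum hN hNlaw hN₁, variance_natCast_of_hasSum hN hNlaw hN₁ hN₂,
      variance_natCast_of_hasSum (hX 0) (hXlaw 0) hX₁ hX₂,
      integral_natCast_of_hasSum (hX 0) (hXlaw 0) hX₁]
    ring

section MixFam

variable {Ω : Type*} [MeasurableSpace Ω] {P : Measure Ω}
  {N : Ω → ℕ} {X : ℕ → Ω → ℕ} {Y : ℕ → Ω → ℝ}

lemma measurable_mixFam (hN : Measurable N) (hX : ∀ i, Measurable (X i))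
    (hY : ∀ i, Measurable (Y i)) : ∀ i, Measurable (mixFam N X Y i)
  | .inl _ => hN
  | .inr (.inl j) => hX j
  | .inr (.inr j) => hY j

lemma iIndepFun_X_of_mixFam (h : iIndepFun (mixFam N X Y) P) : iIndepFun X P :=
  h.precomp (g := fun j => .inr (.inl j)) fun _ _ hij => by simpa using hij

lemma iIndepFun_Y_of_mixFam (h : iIndepFun (mixFam N X Y) P) : iIndepFun Y P :=
  h.precomp (g := fun j => .inr (.inr j)) fun _ _ hij => by simpa using hij

lemma indepFun_sum_range_X_of_mixFam (h : iIndepFun (mixFam N X Y) P) (hN : Measurable N)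
    (hX : ∀ i, Measurable (X i)) (hY : ∀ i, Measurable (Y i)) (n : ℕ) :
    IndepFun N (fun ω => ∑ j ∈ range n, (X j ω : ℝ)) P :=
  h.indepFun_of_measurable_biSup (measurable_mixFam hN hX hY)
    (S := {.inl ()}) (T := Set.range fun j => .inr (.inl j)) (by simp)
    (measurable_biSup_comap_of_mem (f := mixFam N X Y) (i := .inl ()) rfl)
    (measurable_sum _ fun j _ => measurable_from_nat.comp
      (measurable_biSup_comap_of_mem (f := mixFam N X Y) (i := .inr (.inl j)) ⟨j, rfl⟩))

lemma indepFun_randomSum_sum_range_Y_of_mixFam (h : iIndepFun (mixFam N X Y) P)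
    (hN : Measurable N) (hX : ∀ i, Measurable (X i)) (hY : ∀ i, Measurable (Y i)) (n : ℕ) :
    IndepFun (randomSum N X) (fun ω => ∑ i ∈ range n, Y i ω) P :=
  h.indepFun_of_measurable_biSup (measurable_mixFam hN hX hY)
    (S := (Set.range fun j => .inr (.inr j))ᶜ) (T := Set.range fun j => .inr (.inr j))
    disjoint_compl_left
    (measurable_randomSum
      (measurable_biSup_comap_of_mem (f := mixFam N X Y) (i := .inl ()) (by simp))
      fun j => measurable_biSup_comap_of_mem (f := mixFam N X Y) (i := .inr (.inl j)) (by simp))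
    (measurable_sum _ fun j _ =>
      measurable_biSup_comap_of_mem (f := mixFam N X Y) (i := .inr (.inr j)) ⟨j, rfl⟩)

end MixFam

/-- **Variance of the compound Poisson process of order `k`:**
`Z(t)` is square-integrable and
`Var[Z(t)] = (k(k+1)/2) λ t Var(Y₁) + (k(k+1)(2k+1)/6) λ t (𝔼[Y₁])²`. -/
theorem cppok_variance
    {Ω : Type*} [MeasurableSpace Ω] (P : Measure Ω) [IsProbabilityMeasure P]
    (k : ℕ) (hk : 1 ≤ k) (lam t : ℝ) (hlam : 0 < lam) (ht : 0 < t)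
    (N : Ω → ℕ) (X : ℕ → Ω → ℕ) (Y : ℕ → Ω → ℝ)
    (hNmeas : Measurable N) (hXmeas : ∀ i, Measurable (X i))
    (hYmeas : ∀ i, Measurable (Y i))
    -- `N` is Poisson distributed with parameter `k λ t`
    (hNdist : ∀ n : ℕ, P {ω | N ω = n}
      = ENNReal.ofReal (Real.exp (-((k : ℝ) * lam * t)) * ((k : ℝ) * lam * t) ^ n
          / (Nat.factorial n : ℝ)))
    -- each `X i` is uniformly distributed on `{1, …, k}`
    (hXdist : ∀ i, ∀ m : ℕ,
      P {ω | X i ω = m} = if 1 ≤ m ∧ m ≤ k then ((k : ℝ≥0∞))⁻¹ else 0)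
    -- the `Y i` are identically distributed and square-integrable
    (hYident : ∀ i, IdentDistrib (Y i) (Y 0) P P)
    (hYsq : MemLp (Y 0) 2 P)
    -- `N`, `(X i)` and `(Y i)` are mutually independent
    (hindep : iIndepFun (mixFam N X Y) P) :
    MemLp (fun ω => ∑ i ∈ Finset.range (∑ j ∈ Finset.range (N ω), X j ω), Y i ω) 2 P ∧
      variance (fun ω => ∑ i ∈ Finset.range (∑ j ∈ Finset.range (N ω), X j ω), Y i ω) P
        = ((k : ℝ) * ((k : ℝ) + 1) / 2) * lam * t * variance (Y 0) P
          + ((k : ℝ) * ((k : ℝ) + 1) * (2 * (k : ℝ) + 1) / 6) * lam * t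
              * (∫ ω, Y 0 ω ∂P) ^ 2 := by
  set r : ℝ≥0 := ⟨k * lam * t, by positivity⟩
  have hNlaw : ∀ n, P.real (N ⁻¹' {n}) = (poissonMeasure r).real {n} := fun n => by
    rw [poissonMeasure_real_singleton, measureReal_def]
    exact (congrArg ENNReal.toReal (hNdist n)).trans (ENNReal.toReal_ofReal (by positivity))
  have hXlaw : ∀ i m, P.real (X i ⁻¹' {m}) = if 1 ≤ m ∧ m ≤ k then (k : ℝ)⁻¹ else 0 :=
    fun i m => by
      rw [measureReal_def]
      exact (congrArg ENNReal.toReal (hXdist i m)).trans (by split_ifs <;> simp)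
  obtain ⟨hM2, hM1, hMvar⟩ := randomSum_poisson_uniformIcc_moments (Nat.one_le_iff_ne_zero.mp hk)
    hNmeas hXmeas hNlaw hXlaw (iIndepFun_X_of_mixFam hindep)
    (indepFun_sum_range_X_of_mixFam hindep hNmeas hXmeas hYmeas)
  have hMY := indepFun_randomSum_sum_range_Y_of_mixFam hindep hNmeas hXmeas hYmeas
  have hY := iIndepFun_Y_of_mixFam hindep
  have hM := measurable_randomSum hNmeas hXmeas
  refine ⟨memLp_two_randomSum hM hYmeas hYident hYsq hY hM2 hMY, ?_⟩
  change variance (randomSum (randomSum N X) Y) P = _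
  rw [variance_randomSum hM hYmeas hYident hYsq hY hM2 hMY, hM1, hMvar,
    show (r : ℝ) = k * lam * t from rfl]
  ring
end

section
/- Let N be Poisson distributed with parameter kλt, let (X_i)_{i≥1} be i.i.d. uniform on {1,…,k}, and let (Y_i)_{i≥1} be i.i.d. ℕ-valued random variables with pmf q, all mutually independent, and set Z(t) = ∑_{i=1}^{∑_{j=1}^{N} X_j} Y_i. Independently, let M be Poisson distributed with parameter kλt and (W_j)_{j≥1} i.i.d. ℕ-valued with pmf α given by α_j = (1/k) ∑_{m=1}^{k} q^{*m}(j) (equivalently, W_j is distributed as ∑_{i=1}^{U} Y'_i for U uniform on {1,…,k} independent of i.i.d. copies Y'_i of Y_1), with M and (W_j) independent. Then Z(t) and D(t) = ∑_{j=1}^{M} W_j have the same distribution: ℙ[Z(t) = n] = ℙ[D(t) = n] for all n ∈ ℕ. In particular, the compound Poisson process of order k with ℕ-valued compounding variables is a compound Poisson process, hence a Lévy process and infinitely divisible. -/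
/-!
Write `Q(x) = ∑ q n xⁿ` for the generating function of `Y` and `U(x) = (x + ⋯ + xᵏ) / k` for that
of `X`. Given `N = m`, the number of summands `∑_{j<m} X j` has law `U^m`, and given that it
equals `s` the sum of the `Y`'s has law `Q^s`; so `Z(t)` given `N = m` has law
`∑_s [xˢ]U^m · Q^s = U(Q)^m`. Since `U(Q)` is the generating function of `α`, this is the law of
`D(t)` given `M = m`, and `N`, `M` have the same law.
-/

open MeasureTheory ProbabilityTheory
open scoped ENNReal NNReal

/-- `convPow q m` is the `m`-fold convolution `q^{*m}` of the pmf `q` on `ℕ`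
(the pmf of the sum of `m` i.i.d. random variables with pmf `q`);
`q^{*0}` is the point mass at `0`. -/
noncomputable def convPow (q : ℕ → ℝ) : ℕ → ℕ → ℝ
  | 0 => fun j => if j = 0 then 1 else 0
  | m + 1 => fun j => ∑ i ∈ Finset.range (j + 1), q i * convPow q m (j - i)

open Finset Polynomial

lemma convPow_nonneg {q : ℕ → ℝ} (hq : ∀ n, 0 ≤ q n) (m n : ℕ) : 0 ≤ convPow q m n := by
  induction m generalizing n with
  | zero => simp only [convPow]; positivity
  | succ m ih => exact sum_nonneg fun i _ => mul_nonneg (hq i) (ih _)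

lemma convPow_eq_coeff_pow (q : ℕ → ℝ) (m n : ℕ) :
    convPow q m n = PowerSeries.coeff n (PowerSeries.mk q ^ m) := by
  induction m generalizing n with
  | zero => simp [convPow, PowerSeries.coeff_one]
  | succ m ih =>
    rw [pow_succ', PowerSeries.coeff_mul, Nat.sum_antidiagonal_eq_sum_range_succ_mk]
    simp [convPow, ih]

lemma convPow_coeff (U : ℝ[X]) (m s : ℕ) : convPow U.coeff m s = (U ^ m).coeff s := by
  rw [convPow_eq_coeff_pow, ← coeff_coe, Polynomial.coe_pow]
  rfl

lemma convPow_coeff_aeval (U : ℝ[X]) (q : ℕ → ℝ) (m n : ℕ) :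
    convPow (fun j => PowerSeries.coeff j (aeval (PowerSeries.mk q) U)) m n
      = ∑ s ∈ range ((U ^ m).natDegree + 1), convPow U.coeff m s * convPow q s n := by
  have hmk : PowerSeries.mk (fun j => PowerSeries.coeff j (aeval (PowerSeries.mk q) U))
      = aeval (PowerSeries.mk q) U := PowerSeries.ext fun _ => by simp
  rw [convPow_eq_coeff_pow, hmk, ← map_pow, aeval_eq_sum_range, map_sum]
  refine sum_congr rfl fun s _ => ?_
  rw [convPow_coeff, convPow_eq_coeff_pow, PowerSeries.coeff_smul, smul_eq_mul]

lemma tsum_ofReal_convPow_mul_convPow {U : ℝ[X]} (hU : ∀ j, 0 ≤ U.coeff j) {q : ℕ → ℝ}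
    (hq : ∀ n, 0 ≤ q n) (m n : ℕ) :
    ∑' s, ENNReal.ofReal (convPow U.coeff m s) * ENNReal.ofReal (convPow q s n)
      = ENNReal.ofReal
          (convPow (fun j => PowerSeries.coeff j (aeval (PowerSeries.mk q) U)) m n) := by
  rw [convPow_coeff_aeval, ENNReal.ofReal_sum_of_nonneg fun s _ =>
    mul_nonneg (convPow_nonneg hU m s) (convPow_nonneg hq s n), tsum_eq_sum fun s hs => ?_]
  · exact sum_congr rfl fun s _ => (ENNReal.ofReal_mul (convPow_nonneg hU m s)).symm
  · rw [convPow_coeff, coeff_eq_zero_of_natDegree_lt (by simpa [Nat.lt_succ_iff] using hs)]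
    simp

noncomputable def uniformPGF (k : ℕ) : ℝ[X] := (k : ℝ)⁻¹ • ∑ j ∈ Icc 1 k, X ^ j

lemma coeff_uniformPGF (k j : ℕ) :
    (uniformPGF k).coeff j = if 1 ≤ j ∧ j ≤ k then (k : ℝ)⁻¹ else 0 := by
  simp [uniformPGF, finsetSum_coeff, coeff_X_pow]

lemma coeff_aeval_uniformPGF (q : ℕ → ℝ) (k n : ℕ) :
    PowerSeries.coeff n (aeval (PowerSeries.mk q) (uniformPGF k))
      = 1 / k * ∑ m ∈ Icc 1 k, convPow q m n := by
  simp [uniformPGF, convPow_eq_coeff_pow]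

lemma measurable_iSup_comap_of_mem {Ω ι β : Type*} [mβ : MeasurableSpace β] (f : ι → Ω → β)
    {S : Set ι} (i : ι) (hi : i ∈ S) : Measurable[⨆ j ∈ S, mβ.comap (f j)] (f i) :=
  Measurable.of_comap_le (le_iSup₂ (f := fun j _ => mβ.comap (f j)) i hi)

lemma measurable_randomIndex {Ω β : Type*} {mΩ : MeasurableSpace Ω} [MeasurableSpace β]
    {N : Ω → ℕ} {G : ℕ → Ω → β} (hN : Measurable N) (hG : ∀ m, Measurable (G m)) :
    Measurable fun ω => G (N ω) ω :=
  (measurable_from_prod_countable_right (f := fun p : ℕ × Ω => G p.1 p.2) hG).comp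
    (hN.prodMk measurable_id)

namespace ProbabilityTheory

variable {Ω : Type*} [MeasurableSpace Ω] {P : Measure Ω}

lemma iIndepFun.indepFun_of_measurable_iSup {ι β γ δ : Type*} [mβ : MeasurableSpace β]
    [MeasurableSpace γ] [MeasurableSpace δ] {f : ι → Ω → β} (hf : ∀ i, Measurable (f i))
    (hind : iIndepFun f P) {S T : Set ι} (hST : Disjoint S T) {g : Ω → γ} {h : Ω → δ}
    (hg : Measurable[⨆ i ∈ S, mβ.comap (f i)] g) (hh : Measurable[⨆ i ∈ T, mβ.comap (f i)] h) :
    IndepFun g h P :=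
  (IndepFun_iff_Indep g h P).2 <| indep_of_indep_of_le
    (indep_iSup_of_disjoint (fun i => (hf i).comap_le) ((iIndepFun_iff_iIndep _ _ _).1 hind) hST)
    hg.comap_le hh.comap_le

lemma measure_randomIndex_preimage {β : Type*} [MeasurableSpace β] {N : Ω → ℕ}
    {G : ℕ → Ω → β} (hN : Measurable N) (hG : ∀ m, Measurable (G m))
    (hind : ∀ m, IndepFun N (G m) P) {A : Set β} (hA : MeasurableSet A) :
    P {ω | G (N ω) ω ∈ A} = ∑' m, P {ω | N ω = m} * P (G m ⁻¹' A) := by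
  have hdecomp : {ω | G (N ω) ω ∈ A} = ⋃ m, N ⁻¹' {m} ∩ G m ⁻¹' A := by
    ext ω; simp
  rw [hdecomp, measure_iUnion]
  · exact tsum_congr fun m =>
      (hind m).measure_inter_preimage_eq_mul _ _ (measurableSet_singleton m) hA
  · intro m m' hmm'
    exact Disjoint.mono Set.inter_subset_left Set.inter_subset_left
      (Disjoint.preimage N (Set.disjoint_singleton.2 hmm'))
  · exact fun m => (hN (measurableSet_singleton m)).inter (hG m hA)

lemma IndepFun.measure_add_eq_sum {f g : Ω → ℕ} (hf : Measurable f) (hg : Measurable g)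
    (hfg : IndepFun f g P) (n : ℕ) :
    P {ω | f ω + g ω = n} = ∑ j ∈ range (n + 1), P {ω | f ω = j} * P {ω | g ω = n - j} := by
  have hdecomp : {ω | f ω + g ω = n} = ⋃ j ∈ range (n + 1), f ⁻¹' {j} ∩ g ⁻¹' {n - j} := by
    ext ω
    simp only [Set.mem_ofPred_eq, Set.mem_iUnion, Set.mem_inter_iff, Set.mem_preimage,
      Set.mem_singleton_iff, mem_range, exists_prop]
    constructor
    · rintro rfl; exact ⟨f ω, by omega, rfl, by omega⟩
    · rintro ⟨j, hj, rfl, h⟩; omega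
  rw [hdecomp, measure_biUnion_finset]
  · exact sum_congr rfl fun j _ =>
      hfg.measure_inter_preimage_eq_mul _ _ (measurableSet_singleton _) (measurableSet_singleton _)
  · intro j _ j' _ hjj'
    exact Disjoint.mono Set.inter_subset_left Set.inter_subset_left
      (Disjoint.preimage f (Set.disjoint_singleton.2 hjj'))
  · exact fun j _ => (hf (measurableSet_singleton _)).inter (hg (measurableSet_singleton _))

variable [IsProbabilityMeasure P]

lemma iIndepFun.measure_sum_range_eq_convPow {f : ℕ → Ω → ℕ} (hf : ∀ i, Measurable (f i))
    (hind : iIndepFun f P) {p : ℕ → ℝ} (hp : ∀ n, 0 ≤ p n)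
    (hlaw : ∀ i n, P {ω | f i ω = n} = ENNReal.ofReal (p n)) (s n : ℕ) :
    P {ω | ∑ i ∈ range s, f i ω = n} = ENNReal.ofReal (convPow p s n) := by
  induction s generalizing n with
  | zero => by_cases hn : n = 0 <;> simp [convPow, hn, eq_comm]
  | succ s ih =>
    have hsum : IndepFun (fun ω => ∑ i ∈ range s, f i ω) (f s) P := by
      simpa only [sum_fn] using hind.indepFun_finsetSum_of_notMem hf (notMem_range_self (n := s))
    simp only [sum_range_succ, add_comm _ (f s _)]
    rw [hsum.symm.measure_add_eq_sum (hf s) (measurable_sum _ fun i _ => hf i), convPow,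
      ENNReal.ofReal_sum_of_nonneg fun j _ => mul_nonneg (hp _) (convPow_nonneg hp _ _)]
    exact sum_congr rfl fun j _ => by rw [hlaw, ih, ENNReal.ofReal_mul (hp j)]

lemma measure_randomSum_eq_tsum {N : Ω → ℕ} {f : ℕ → Ω → ℕ} (hN : Measurable N)
    (hf : ∀ i, Measurable (f i)) (hind : iIndepFun f P)
    (hNf : ∀ m, IndepFun N (fun ω => ∑ i ∈ range m, f i ω) P) {p : ℕ → ℝ} (hp : ∀ n, 0 ≤ p n)
    (hlaw : ∀ i n, P {ω | f i ω = n} = ENNReal.ofReal (p n)) (n : ℕ) :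
    P {ω | ∑ i ∈ range (N ω), f i ω = n}
      = ∑' m, P {ω | N ω = m} * ENNReal.ofReal (convPow p m n) := by
  simp_rw [← hind.measure_sum_range_eq_convPow hf hp hlaw]
  exact measure_randomIndex_preimage hN (fun m => measurable_sum _ fun i _ => hf i) hNf
    (measurableSet_singleton n)

lemma measure_randomSum_randomSum_eq_tsum {N : Ω → ℕ} {X Y : ℕ → Ω → ℕ} (hN : Measurable N)
    (hX : ∀ i, Measurable (X i)) (hY : ∀ i, Measurable (Y i))
    (hind : iIndepFun (Sum.elim (fun _ : Unit => N) (Sum.elim X Y)) P)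
    {U : ℝ[X]} (hU : ∀ j, 0 ≤ U.coeff j) {q : ℕ → ℝ} (hq : ∀ n, 0 ≤ q n)
    (hXlaw : ∀ i m, P {ω | X i ω = m} = ENNReal.ofReal (U.coeff m))
    (hYlaw : ∀ i n, P {ω | Y i ω = n} = ENNReal.ofReal (q n)) (n : ℕ) :
    P {ω | ∑ i ∈ range (∑ j ∈ range (N ω), X j ω), Y i ω = n}
      = ∑' m, P {ω | N ω = m} * ENNReal.ofReal
          (convPow (fun j => PowerSeries.coeff j (aeval (PowerSeries.mk q) U)) m n) := by
  set F := Sum.elim (fun _ : Unit => N) (Sum.elim X Y)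
  have hF : ∀ i, Measurable (F i) := by rintro (_ | i | i) <;> simp [F, *]
  have hXind : iIndepFun X P :=
    hind.precomp (g := fun j => .inr (.inl j)) (by simp [Function.Injective])
  have hYind : iIndepFun Y P :=
    hind.precomp (g := fun j => .inr (.inr j)) (by simp [Function.Injective])
  have hNX : ∀ m, IndepFun N (fun ω => ∑ j ∈ range m, X j ω) P := fun m =>
    hind.indepFun_of_measurable_iSup hF (S := {.inl ()}) (T := Set.range fun j => .inr (.inl j))
      (by simp) (measurable_iSup_comap_of_mem F (.inl ()) rfl)
      (measurable_sum _ fun j _ => measurable_iSup_comap_of_mem F (.inr (.inl j)) ⟨j, rfl⟩)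
  have hSY : ∀ s, IndepFun (fun ω => ∑ j ∈ range (N ω), X j ω)
      (fun ω => ∑ i ∈ range s, Y i ω) P := fun s =>
    hind.indepFun_of_measurable_iSup hF (T := Set.range fun j => .inr (.inr j))
      disjoint_compl_left
      (measurable_randomIndex (measurable_iSup_comap_of_mem F (.inl ()) (by simp))
        fun m => measurable_sum _ fun j _ =>
          measurable_iSup_comap_of_mem F (.inr (.inl j)) (by simp))
      (measurable_sum _ fun j _ => measurable_iSup_comap_of_mem F (.inr (.inr j)) ⟨j, rfl⟩)
  have hlawS := measure_randomSum_eq_tsum hN hX hXind hNX hU hXlaw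
  calc _ = ∑' s, P {ω | ∑ j ∈ range (N ω), X j ω = s} * ENNReal.ofReal (convPow q s n) :=
        measure_randomSum_eq_tsum (measurable_randomIndex hN fun m => measurable_sum _
          fun j _ => hX j) hY hYind hSY hq hYlaw n
    _ = ∑' m, P {ω | N ω = m} * ∑' s, ENNReal.ofReal (convPow U.coeff m s)
          * ENNReal.ofReal (convPow q s n) := by
        simp_rw [hlawS, ← ENNReal.tsum_mul_right, ← ENNReal.tsum_mul_left, mul_assoc]
        exact ENNReal.tsum_comm
    _ = _ := by simp_rw [tsum_ofReal_convPow_mul_convPow hU hq]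

end ProbabilityTheory

theorem cppok_eq_compound_poisson_distribution_general
    {Ω : Type*} [MeasurableSpace Ω] (P : Measure Ω) [IsProbabilityMeasure P]
    (k : ℕ) (hk : 1 ≤ k) (lam t : ℝ)
    (N M : Ω → ℕ) (X Y W : ℕ → Ω → ℕ)
    (hNmeas : Measurable N) (hMmeas : Measurable M)
    (hXmeas : ∀ i, Measurable (X i)) (hYmeas : ∀ i, Measurable (Y i))
    (hWmeas : ∀ j, Measurable (W j))
    (q : ℕ → ℝ) (hq : ∀ n, 0 ≤ q n)
    -- `N` and `M` are Poisson distributed with parameter `k λ t`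
    (hNdist : ∀ n : ℕ, P {ω | N ω = n}
      = ENNReal.ofReal (Real.exp (-((k : ℝ) * lam * t)) * ((k : ℝ) * lam * t) ^ n
          / (Nat.factorial n : ℝ)))
    (hMdist : ∀ n : ℕ, P {ω | M ω = n}
      = ENNReal.ofReal (Real.exp (-((k : ℝ) * lam * t)) * ((k : ℝ) * lam * t) ^ n
          / (Nat.factorial n : ℝ)))
    -- each `X i` is uniformly distributed on `{1, …, k}`
    (hXdist : ∀ i, ∀ m : ℕ,
      P {ω | X i ω = m} = if 1 ≤ m ∧ m ≤ k then ((k : ℝ≥0∞))⁻¹ else 0)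
    -- each `Y i` has pmf `q`
    (hYdist : ∀ i, ∀ n : ℕ, P {ω | Y i ω = n} = ENNReal.ofReal (q n))
    -- each `W j` has pmf `α` with `α j = (1/k) ∑_{m=1}^k q^{*m}(j)`
    (hWdist : ∀ j, ∀ n : ℕ, P {ω | W j ω = n}
      = ENNReal.ofReal ((1 / (k : ℝ)) * ∑ m ∈ Finset.Icc 1 k, convPow q m n))
    -- `N`, `(X i)` and `(Y i)` are mutually independent
    (hindep : iIndepFun
      (Sum.elim (fun _ : Unit => N) (Sum.elim X Y)) P)
    -- `M, W 0, W 1, …` are mutually independent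
    (hindep' : iIndepFun
      (fun i : Option ℕ => Option.elim i M W) P) :
    ∀ n : ℕ,
      P {ω | (∑ i ∈ Finset.range (∑ j ∈ Finset.range (N ω), X j ω), Y i ω) = n}
        = P {ω | (∑ j ∈ Finset.range (M ω), W j ω) = n} := by
  intro n
  have hk_pos : (0 : ℝ) < k := by exact_mod_cast hk
  have hU : ∀ j, 0 ≤ (uniformPGF k).coeff j := fun j => by
    rw [coeff_uniformPGF]; split_ifs <;> positivity
  have hXlaw : ∀ i m, P {ω | X i ω = m} = ENNReal.ofReal ((uniformPGF k).coeff m) := fun i m => by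
    rw [hXdist, coeff_uniformPGF]
    split_ifs <;> simp [ENNReal.ofReal_inv_of_pos hk_pos]
  have hα : ∀ n, 0 ≤ PowerSeries.coeff n (aeval (PowerSeries.mk q) (uniformPGF k)) := fun n => by
    rw [coeff_aeval_uniformPGF]
    exact mul_nonneg (by positivity) (sum_nonneg fun m _ => convPow_nonneg hq m n)
  have hWind : iIndepFun W P := hindep'.precomp (g := some) (Option.some_injective _)
  have hMW : ∀ m, IndepFun M (fun ω => ∑ j ∈ range m, W j ω) P := fun m =>
    hindep'.indepFun_of_measurable_iSup (by rintro (_ | j) <;> simp [*]) (S := {none})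
      (T := Set.range some) (by simp)
      (measurable_iSup_comap_of_mem (fun i => Option.elim i M W) none rfl)
      (measurable_sum _ fun j _ =>
        measurable_iSup_comap_of_mem (fun i => Option.elim i M W) (some j) ⟨j, rfl⟩)
  rw [measure_randomSum_randomSum_eq_tsum hNmeas hXmeas hYmeas hindep hU hq hXlaw hYdist n,
    measure_randomSum_eq_tsum hMmeas hWmeas hWind hMW hα
      (by simpa only [coeff_aeval_uniformPGF] using hWdist) n]
  simp_rw [hNdist, hMdist]

/-- **The compound Poisson process of order `k` (with ℕ-valued compounding variables)
is a compound Poisson process:** `Z(t) = ∑_{i < ∑_{j<N} X j} Y i` has the same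
distribution as `D(t) = ∑_{j<M} W j`, where `M` is Poisson with parameter `k λ t` and
the `W j` are i.i.d. with pmf `α j = (1/k) ∑_{m=1}^k q^{*m}(j)`, independent of `M`. -/
theorem cppok_eq_compound_poisson_distribution
    {Ω : Type*} [MeasurableSpace Ω] (P : Measure Ω) [IsProbabilityMeasure P]
    (k : ℕ) (hk : 1 ≤ k) (lam t : ℝ) (hlam : 0 < lam) (ht : 0 < t)
    (N M : Ω → ℕ) (X Y W : ℕ → Ω → ℕ)
    (hNmeas : Measurable N) (hMmeas : Measurable M)
    (hXmeas : ∀ i, Measurable (X i)) (hYmeas : ∀ i, Measurable (Y i))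
    (hWmeas : ∀ j, Measurable (W j))
    (q : ℕ → ℝ) (hq : ∀ n, 0 ≤ q n)
    -- `N` and `M` are Poisson distributed with parameter `k λ t`
    (hNdist : ∀ n : ℕ, P {ω | N ω = n}
      = ENNReal.ofReal (Real.exp (-((k : ℝ) * lam * t)) * ((k : ℝ) * lam * t) ^ n
          / (Nat.factorial n : ℝ)))
    (hMdist : ∀ n : ℕ, P {ω | M ω = n}
      = ENNReal.ofReal (Real.exp (-((k : ℝ) * lam * t)) * ((k : ℝ) * lam * t) ^ n
          / (Nat.factorial n : ℝ)))
    -- each `X i` is uniformly distributed on `{1, …, k}`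
    (hXdist : ∀ i, ∀ m : ℕ,
      P {ω | X i ω = m} = if 1 ≤ m ∧ m ≤ k then ((k : ℝ≥0∞))⁻¹ else 0)
    -- each `Y i` has pmf `q`
    (hYdist : ∀ i, ∀ n : ℕ, P {ω | Y i ω = n} = ENNReal.ofReal (q n))
    -- each `W j` has pmf `α` with `α j = (1/k) ∑_{m=1}^k q^{*m}(j)`
    (hWdist : ∀ j, ∀ n : ℕ, P {ω | W j ω = n}
      = ENNReal.ofReal ((1 / (k : ℝ)) * ∑ m ∈ Finset.Icc 1 k, convPow q m n))
    -- `N`, `(X i)` and `(Y i)` are mutually independent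
    (hindep : iIndepFun
      (Sum.elim (fun _ : Unit => N) (Sum.elim X Y)) P)
    -- `M, W 0, W 1, …` are mutually independent
    (hindep' : iIndepFun
      (fun i : Option ℕ => Option.elim i M W) P) :
    ∀ n : ℕ,
      P {ω | (∑ i ∈ Finset.range (∑ j ∈ Finset.range (N ω), X j ω), Y i ω) = n}
        = P {ω | (∑ j ∈ Finset.range (M ω), W j ω) = n} :=
  cppok_eq_compound_poisson_distribution_general P k hk lam t N M X Y W hNmeas hMmeas hXmeas hYmeas
    hWmeas q hq hNdist hMdist hXdist hYdist hWdist hindep hindep'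
end
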